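/- arXiv:1111.0321 — 6 statements merged into one kernel-verified Lean document; each statement's English description precedes it below -/
import Mathlib

section
/- In a finite connected graph with local port numberings, if two nodes v and w have equal views truncated to depth n-1 (where n is the number of nodes of the graph), then their full infinite views are equal. -/
/-!
Agreement of observations up to depth `k + 1` is obtained from agreement up to depth `k` by one
round of partition refinement: compare degrees and, port by port, the entry ports and the
depth-`k` classes of the neighbours. These partitions of the `n` nodes get finer as `k` grows, and
each strict refinement adds a class, so some depth `k ≤ n - 1` is a fixed point of the refinement;
from then on the partition never changes, and agreement up to depth `n - 1` is agreement at every
depth.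
-/

/-- A port-labeled graph on vertex type `V`: each node `v` has degree `deg v`, and
`next v p` gives, for a port `p < deg v`, the node reached by leaving `v` through
port `p` together with the entry port at that node (and `none` for invalid ports). -/
structure PGraph (V : Type) where
  deg : V → ℕ
  next : V → ℕ → Option (V × ℕ)

namespace PGraph

variable {V : Type}

/-- Observation along a port sequence: the list of entry ports encountered and the
degree of the node finally reached (`none` if the port sequence is invalid).
The (infinite) view from a node is exactly the function `fun q => obs G v q`. -/
def obs (G : PGraph V) : V → List ℕ → Option (List ℕ × ℕ)
  | v, [] => some ([], G.deg v)
  | v, p :: q =>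
    match G.next v p with
    | some (w, e) => (obs G w q).map fun r => (e :: r.1, r.2)
    | none => none

/-- Colored observation: additionally records the color of the reached node. -/
def cobs {C : Type} (G : PGraph V) (col : V → C) : V → List ℕ → Option (List ℕ × ℕ × C)
  | v, [] => some ([], G.deg v, col v)
  | v, p :: q =>
    match G.next v p with
    | some (w, e) => (cobs G col w q).map fun r => (e :: r.1, r.2)
    | none => none

/-- Two nodes have equal views iff they give the same observation along every port
sequence. -/
def SameView (G : PGraph V) (v w : V) : Prop := ∀ q : List ℕ, G.obs v q = G.obs w q

/-- Equality of enhanced views (views with occupied nodes marked by `occ`). -/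
def SameEView (G : PGraph V) (occ : V → Bool) (v w : V) : Prop :=
  ∀ q : List ℕ, G.cobs occ v q = G.cobs occ w q

/-- Equality of colored views, for an arbitrary coloring of the nodes. -/
def SameCView {C : Type} (G : PGraph V) (col : V → C) (v w : V) : Prop :=
  ∀ q : List ℕ, G.cobs col v q = G.cobs col w q

/-- The node reached by following a port sequence. -/
def run (G : PGraph V) : V → List ℕ → Option V
  | v, [] => some v
  | v, p :: q =>
    match G.next v p with
    | some (w, _) => run G w q
    | none => none

def Connected (G : PGraph V) : Prop := ∀ v w : V, ∃ q : List ℕ, G.run v q = some w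

/-- Well-formedness: ports `0,…,deg v - 1` are exactly the valid ports, entry ports are
valid ports of the target node, and the edge taken backwards by the entry port leads back. -/
def WellFormed (G : PGraph V) : Prop :=
  (∀ v p, (G.next v p).isSome ↔ p < G.deg v) ∧
  ∀ v p w e, G.next v p = some (w, e) → e < G.deg w ∧ G.next w e = some (v, p)

end PGraph

namespace Setoid

variable {α : Type*} {r s : Setoid α}

theorem map_of_le_surjective (hrs : r ≤ s) : Function.Surjective (map_of_le hrs) :=
  Quotient.ind fun a => ⟨Quotient.mk _ a, rfl⟩

variable [Finite α]

theorem card_quotient_le_of_le (hrs : r ≤ s) : Nat.card (Quotient s) ≤ Nat.card (Quotient r) :=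
  Nat.card_le_card_of_surjective _ (map_of_le_surjective hrs)

theorem eq_of_le_of_card_quotient_le (hrs : r ≤ s)
    (hcard : Nat.card (Quotient r) ≤ Nat.card (Quotient s)) : r = s := by
  have hinj : Function.Injective (map_of_le hrs) :=
    ((map_of_le_surjective hrs).bijective_of_nat_card_le hcard).1
  exact le_antisymm hrs fun x y hxy => Quotient.exact (hinj (Quotient.sound hxy))

theorem exists_succ_eq_of_antitone [Nonempty α] {r : ℕ → Setoid α} (hr : Antitone r) :
    ∃ k ≤ Nat.card α - 1, r (k + 1) = r k := by
  by_contra! hne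
  have hgrowth : ∀ k ≤ Nat.card α, k + 1 ≤ Nat.card (Quotient (r k)) := by
    intro k
    induction k with
    | zero =>
      have : Nonempty (Quotient (r 0)) := .map (Quotient.mk _) ‹_›
      exact fun _ => Nat.card_pos
    | succ k ih =>
      intro hk
      have hlt : Nat.card (Quotient (r k)) < Nat.card (Quotient (r (k + 1))) :=
        (card_quotient_le_of_le (hr k.le_succ)).lt_of_ne fun hcard =>
          hne k (by omega) (eq_of_le_of_card_quotient_le (hr k.le_succ) hcard.ge)
      have := ih (by omega)
      omega
  have hbound : Nat.card (Quotient (r (Nat.card α))) ≤ Nat.card α :=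
    Nat.card_le_card_of_surjective _ Quotient.mk_surjective
  have := hgrowth (Nat.card α) le_rfl
  omega

end Setoid

namespace PGraph

variable {V : Type} (G : PGraph V)

def ObsEqUpTo (k : ℕ) (v w : V) : Prop :=
  ∀ q : List ℕ, q.length ≤ k → G.obs v q = G.obs w q

/-- One round of partition refinement applied to `R`. -/
def refine (R : V → V → Prop) (v w : V) : Prop :=
  G.deg v = G.deg w ∧
    ∀ p, Option.Rel (fun a b : V × ℕ => a.2 = b.2 ∧ R a.1 b.1) (G.next v p) (G.next w p)

variable {G}

theorem obs_cons_of_next_eq_none {v : V} {p : ℕ} (hv : G.next v p = none) (q : List ℕ) :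
    G.obs v (p :: q) = none := by
  simp [obs, hv]

theorem obs_cons_of_next_eq_some {v v' : V} {p e : ℕ} (hv : G.next v p = some (v', e))
    (q : List ℕ) : G.obs v (p :: q) = (G.obs v' q).map fun r => (e :: r.1, r.2) := by
  simp [obs, hv]

theorem ObsEqUpTo.mono {k m : ℕ} {v w : V} (hkm : k ≤ m) (h : G.ObsEqUpTo m v w) :
    G.ObsEqUpTo k v w :=
  fun q hq => h q (hq.trans hkm)

variable (G)

theorem obsEqUpTo_succ (k : ℕ) : G.ObsEqUpTo (k + 1) = G.refine (G.ObsEqUpTo k) := by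
  ext v w
  constructor
  · intro h
    refine ⟨by simpa [obs] using h [] (by simp), fun p => ?_⟩
    have hp := h [p] (by simp)
    rcases hv : G.next v p with _ | ⟨v', e⟩ <;> rcases hw : G.next w p with _ | ⟨w', e'⟩
    · exact .none
    · simp [obs, hv, hw] at hp
    · simp [obs, hv, hw] at hp
    · rw [obs_cons_of_next_eq_some hv, obs_cons_of_next_eq_some hw] at hp
      have he : e = e' := (by simpa [obs] using hp : e = e' ∧ _).1
      refine .some ⟨he, fun q hq => ?_⟩
      have hpq := h (p :: q) (by simpa using hq)
      rw [obs_cons_of_next_eq_some hv, obs_cons_of_next_eq_some hw, he] at hpq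
      exact Option.map_injective (fun a b hab => by simpa [Prod.ext_iff] using hab) hpq
  · rintro ⟨hdeg, hnext⟩ (_ | ⟨p, q⟩) hq
    · simp [obs, hdeg]
    · have hp := hnext p
      rcases hv : G.next v p with _ | ⟨v', e⟩ <;> rcases hw : G.next w p with _ | ⟨w', e'⟩ <;>
        rw [hv, hw] at hp
      · rw [obs_cons_of_next_eq_none hv, obs_cons_of_next_eq_none hw]
      · cases hp
      · cases hp
      · obtain ⟨⟨rfl, hR⟩⟩ := hp
        rw [obs_cons_of_next_eq_some hv, obs_cons_of_next_eq_some hw, hR q (by simpa using hq)]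

def obsSetoid (k : ℕ) : Setoid V where
  r := G.ObsEqUpTo k
  iseqv :=
    ⟨fun _ _ _ => rfl, fun h q hq => (h q hq).symm, fun h h' q hq => (h q hq).trans (h' q hq)⟩

theorem antitone_obsSetoid : Antitone G.obsSetoid :=
  fun _ _ hkm _ _ => ObsEqUpTo.mono hkm

theorem obsEqUpTo_eq_of_succ_eq {k : ℕ} (hk : G.ObsEqUpTo (k + 1) = G.ObsEqUpTo k) :
    ∀ m, k ≤ m → G.ObsEqUpTo m = G.ObsEqUpTo k := by
  refine Nat.le_induction rfl fun m _ ih => ?_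
  rw [obsEqUpTo_succ, ih, ← obsEqUpTo_succ, hk]

end PGraph

theorem views_eq_of_truncated_eq_general {V : Type} [Fintype V] (G : PGraph V) (v w : V)
    (h : ∀ q : List ℕ, q.length ≤ Fintype.card V - 1 → G.obs v q = G.obs w q) :
    G.SameView v w := by
  have : Nonempty V := ⟨v⟩
  obtain ⟨k, hk, hstab⟩ := Setoid.exists_succ_eq_of_antitone G.antitone_obsSetoid
  rw [Nat.card_eq_fintype_card] at hk
  have hvw : G.ObsEqUpTo k v w := PGraph.ObsEqUpTo.mono hk h
  have hstable : ∀ m, k ≤ m → G.ObsEqUpTo m = G.ObsEqUpTo k :=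
    G.obsEqUpTo_eq_of_succ_eq (congrArg (@Setoid.r V) hstab)
  intro q
  rw [← hstable (max k q.length) (le_max_left _ _)] at hvw
  exact hvw q (le_max_right _ _)

/-- In a finite connected port-labeled graph, if two nodes have equal
views truncated to depth `n - 1` (where `n` is the number of nodes), then their full
infinite views are equal. -/
theorem views_eq_of_truncated_eq {V : Type} [Fintype V] (G : PGraph V)
    (hwf : G.WellFormed) (hconn : G.Connected) (v w : V)
    (h : ∀ q : List ℕ, q.length ≤ Fintype.card V - 1 → G.obs v q = G.obs w q) :
    G.SameView v w :=
  views_eq_of_truncated_eq_general G v w h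
end

section
/- Existence of homologs: if in an initial configuration some two distinct occupied nodes have identical enhanced views, then for every occupied node u there exists a distinct occupied node u' with an enhanced view identical to that of u. -/
/-!
Follow a port sequence `q` from `v` to the occupied node `u`. Since `v'` has the same enhanced
view as `v`, the sequence `q` is also valid from `v'` and leads to some `u'`; the enhanced views
of `u` and `u'` are the tails of those of `v` and `v'` after the common prefix recorded along `q`,
so they agree. The entry ports recorded along `q` are the same from `v` and from `v'`, and
following them backwards from `u = u'` would return both to `v` and to `v'`; hence `u ≠ u'`.
-/

namespace PGraph

variable {V C : Type} {G : PGraph V} {col : V → C} {v v' u u' : V} {q : List ℕ}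

theorem run_append : ∀ (q r : List ℕ) (v : V),
    G.run v (q ++ r) = (G.run v q).bind fun w => G.run w r
  | [], _, _ => rfl
  | p :: q, r, v => by
    simp only [List.cons_append, run]
    cases G.next v p with
    | none => rfl
    | some we => exact run_append q r we.1

theorem cobs_append_of_run_eq_some (col : V → C) : ∀ {q : List ℕ} {v u : V},
    G.run v q = some u → ∃ E : List ℕ,
      ∀ r, G.cobs col v (q ++ r) = (G.cobs col u r).map fun s => (E ++ s.1, s.2)
  | [], v, u, hq => by
    cases hq
    exact ⟨[], fun r => by simp⟩
  | p :: q, v, u, hq => by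
    rcases hwe : G.next v p with _ | ⟨w, e⟩
    · simp [run, hwe] at hq
    · simp only [run, hwe] at hq
      obtain ⟨E, hE⟩ := cobs_append_of_run_eq_some col hq
      refine ⟨e :: E, fun r => ?_⟩
      simp only [List.cons_append, cobs, hwe, hE r, Option.map_map]
      rfl

theorem cobs_eq_some_of_run_eq_some (col : V → C) (hq : G.run v q = some u) :
    ∃ E, G.cobs col v q = some (E, G.deg u, col u) := by
  obtain ⟨E, hE⟩ := cobs_append_of_run_eq_some col hq
  exact ⟨E, by simpa [cobs] using hE []⟩

theorem exists_run_eq_some_of_cobs_isSome : ∀ {q : List ℕ} {v : V},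
    (G.cobs col v q).isSome → ∃ u, G.run v q = some u
  | [], v, _ => ⟨v, rfl⟩
  | p :: q, v, hx => by
    rcases hwe : G.next v p with _ | ⟨w, e⟩
    · simp [cobs, hwe] at hx
    · simp only [cobs, hwe, Option.isSome_map] at hx
      obtain ⟨u, hu⟩ := exists_run_eq_some_of_cobs_isSome hx
      exact ⟨u, by simp [run, hwe, hu]⟩

theorem run_reverse_of_cobs_eq_some (hwf : G.WellFormed) : ∀ {q : List ℕ} {v u : V}
    {E : List ℕ} {d : ℕ} {c : C},
    G.run v q = some u → G.cobs col v q = some (E, d, c) → G.run u E.reverse = some v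
  | [], v, u, E, d, c, hq, hc => by
    cases hq
    simp only [cobs, Option.some.injEq, Prod.mk.injEq] at hc
    simp [← hc.1, run]
  | p :: q, v, u, E, d, c, hq, hc => by
    rcases hwe : G.next v p with _ | ⟨w, e⟩
    · simp [run, hwe] at hq
    · simp only [run, cobs, hwe] at hq hc
      rcases hy : G.cobs col w q with _ | ⟨E', d', c'⟩
      · simp [hy] at hc
      · simp only [hy, Option.map_some, Option.some.injEq, Prod.mk.injEq] at hc
        obtain ⟨rfl, -, -⟩ := hc
        rw [List.reverse_cons, run_append, run_reverse_of_cobs_eq_some hwf hq hy]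
        simp [run, (hwf.2 v p w e hwe).2]

namespace SameCView

theorem apply_eq (h : G.SameCView col v v') : col v = col v' := by
  have h0 := h []
  simp only [cobs, Option.some.injEq, Prod.mk.injEq] at h0
  exact h0.2.2

theorem exists_run_eq_some (h : G.SameCView col v v') (hq : G.run v q = some u) :
    ∃ u', G.run v' q = some u' := by
  obtain ⟨E, hE⟩ := cobs_eq_some_of_run_eq_some col hq
  exact exists_run_eq_some_of_cobs_isSome (by rw [← h q, hE]; rfl)

theorem of_run_eq_some (h : G.SameCView col v v') (hq : G.run v q = some u)
    (hq' : G.run v' q = some u') : G.SameCView col u u' := by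
  obtain ⟨E, hE⟩ := cobs_append_of_run_eq_some col hq
  obtain ⟨E', hE'⟩ := cobs_append_of_run_eq_some col hq'
  have hEE : E = E' := by
    have h0 := (hE []).symm.trans ((h (q ++ [])).trans (hE' []))
    simp only [List.append_nil, cobs, Option.map_some, Option.some.injEq, Prod.mk.injEq] at h0
    exact h0.1
  subst hEE
  have hinj : Function.Injective fun s : List ℕ × ℕ × C => (E ++ s.1, s.2) :=
    fun s t hst => Prod.ext (List.append_cancel_left (Prod.ext_iff.1 hst).1) (Prod.ext_iff.1 hst).2
  exact fun r => Option.map_injective hinj ((hE r).symm.trans ((h (q ++ r)).trans (hE' r)))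

theorem eq_of_run_eq_some (hwf : G.WellFormed) (h : G.SameCView col v v')
    (hq : G.run v q = some u) (hq' : G.run v' q = some u) : v = v' := by
  obtain ⟨E, hE⟩ := cobs_eq_some_of_run_eq_some col hq
  have hE' : G.cobs col v' q = some (E, G.deg u, col u) := (h q).symm.trans hE
  exact Option.some.inj <|
    (run_reverse_of_cobs_eq_some hwf hq hE).symm.trans (run_reverse_of_cobs_eq_some hwf hq' hE')

end SameCView

end PGraph

theorem homologs_exist_general {V : Type} (G : PGraph V)
    (hwf : G.WellFormed) (hconn : G.Connected) (occ : V → Bool)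
    (v v' : V) (hne : v ≠ v')
    (h : G.SameEView occ v v') :
    ∀ u : V, occ u = true → ∃ u' : V, occ u' = true ∧ u ≠ u' ∧ G.SameEView occ u u' := by
  have hvv' : G.SameCView occ v v' := h
  intro u hu
  obtain ⟨q, hq⟩ := hconn v u
  obtain ⟨u', hq'⟩ := hvv'.exists_run_eq_some hq
  have huu' : G.SameCView occ u u' := hvv'.of_run_eq_some hq hq'
  refine ⟨u', huu'.apply_eq ▸ hu, ?_, huu'⟩
  rintro rfl
  exact hne (hvv'.eq_of_run_eq_some hwf hq hq')

/-- existence of homologs.  If in an initial configuration (`occ` marks the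
nonempty set of occupied nodes) some two distinct occupied nodes have identical enhanced
views, then every occupied node `u` has a distinct occupied homolog `u'` whose enhanced
view is identical to that of `u`. -/
theorem homologs_exist {V : Type} [Fintype V] (G : PGraph V)
    (hwf : G.WellFormed) (hconn : G.Connected) (occ : V → Bool)
    (v v' : V) (hne : v ≠ v') (hv : occ v = true) (hv' : occ v' = true)
    (h : G.SameEView occ v v') :
    ∀ u : V, occ u = true → ∃ u' : V, occ u' = true ∧ u ≠ u' ∧ G.SameEView occ u u' :=
  homologs_exist_general G hwf hconn occ v v' hne h
end

section
/- Two agents executing the same deterministic algorithm that are at the same node in the same round must have different memories: if their memories were equal, they would have been woken in the same round and would have traversed identical port sequences, contradicting that they started at different nodes. -/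
/-- A memory box: the degree of the node reached in the current round, the (exit, entry)
ports of the move performed in this round (`none` if the agent stayed idle), and the
list of memories (each a list of memory boxes) of the other agents met in this round. -/
inductive Box : Type where
  | mk (d : ℕ) (move : Option (ℕ × ℕ)) (met : List (List Box)) : Box

/-- The memory of an agent: the sequence of its memory boxes since its wake-up. -/
abbrev Memory : Type := List Box

/-- Effect of a chosen move at node `v`: the resulting node together with the
(exit, entry) ports of the traversed edge (`none` if the agent stays put). -/
def moveOf {V : Type} (G : PGraph V) (v : V) : Option ℕ → V × Option (ℕ × ℕ)
  | none => (v, none)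
  | some p =>
    match G.next v p with
    | some (w, e) => (w, some (p, e))
    | none => (v, none)

/-- A synchronous execution, by anonymous agents indexed by `A` starting at the distinct
nodes `start a`, of the same deterministic algorithm `alg` (a function from memories to
moves: `some p` = leave by port `p`, `none` = stay idle).  The adversary wakes agent `a`
in round `advWake a`; a dormant agent is also woken when an awake agent visits its node.
Memories are the concrete memory-box sequences: in each round one box, recording the
degree seen, the ports of the move, and the memories of all agents met, is appended. -/
structure CRunW {V A : Type} (G : PGraph V) (start : A → V)
    (alg : Memory → Option ℕ) (advWake : A → ℕ) where
  startInj : Function.Injective start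
  wake : A → ℕ
  pos : A → ℕ → V
  mem : A → ℕ → Memory
  wake_le : ∀ a, wake a ≤ advWake a
  wake_visit : ∀ a, wake a < advWake a →
    ∃ b : A, b ≠ a ∧ wake b < wake a ∧ pos b (wake a) = start a
  wake_min : ∀ a t, t < wake a → ∀ b : A, b ≠ a → wake b ≤ t → pos b t ≠ start a
  pos_before : ∀ a t, t ≤ wake a → pos a t = start a
  mem_wake : ∀ a, mem a (wake a) = [Box.mk (G.deg (start a)) none []]
  step_pos : ∀ a t, wake a ≤ t →
    pos a (t + 1) = (moveOf G (pos a t) (alg (mem a t))).1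
  step_mem : ∀ a t, wake a ≤ t → ∃ met : List Memory,
    (∀ m : Memory, m ∈ met ↔
      ∃ b : A, b ≠ a ∧ wake b ≤ t ∧ pos b (t + 1) = pos a (t + 1) ∧ mem b t = m) ∧
    mem a (t + 1) = mem a t ++
      [Box.mk (G.deg (pos a (t + 1))) (moveOf G (pos a t) (alg (mem a t))).2 met]

namespace PGraph

variable {V : Type} {G : PGraph V}

theorem WellFormed.eq_of_next_eq (hwf : G.WellFormed) {v v' : V} {p : ℕ} {x : V × ℕ}
    (h : G.next v p = some x) (h' : G.next v' p = some x) : v = v' := by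
  have hv := (hwf.2 _ _ _ _ h).2
  rw [(hwf.2 _ _ _ _ h').2] at hv
  exact (Prod.ext_iff.mp (Option.some_injective _ hv)).1.symm

theorem WellFormed.eq_of_moveOf_eq (hwf : G.WellFormed) {v v' : V} {m : Option ℕ} (h : moveOf G v m = moveOf G v' m) : v = v' := by
  rcases m with _ | p
  · simpa [moveOf] using h
  cases hv : G.next v p with
  | none =>
    cases hv' : G.next v' p with
    | none => simpa [moveOf, hv, hv'] using h
    | some _ => simp [moveOf, hv, hv'] at h
  | some x =>
    cases hv' : G.next v' p with
    | none => simp [moveOf, hv, hv'] at h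
    | some x' =>
      obtain ⟨w, e⟩ := x
      obtain ⟨w', e'⟩ := x'
      obtain ⟨rfl, rfl⟩ : w = w' ∧ e = e' := by simpa [moveOf, hv, hv'] using h
      exact hwf.eq_of_next_eq hv hv'

end PGraph

namespace CRunW

variable {V A : Type} {G : PGraph V} {start : A → V} {alg : Memory → Option ℕ}
  {advWake : A → ℕ} (r : CRunW G start alg advWake) {a b : A} {s t : ℕ}

theorem length_mem (ht : r.wake a ≤ t) : (r.mem a t).length = t - r.wake a + 1 := by
  induction t, ht using Nat.le_induction with
  | base => simp [r.mem_wake]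
  | succ t ht ih =>
    obtain ⟨_, -, hstep⟩ := r.step_mem a t ht
    rw [hstep, List.length_append, ih]
    simp only [List.length_singleton]
    omega

theorem mem_prefix (hs : r.wake a ≤ s) (hst : s ≤ t) : r.mem a s <+: r.mem a t := by
  induction t, hst using Nat.le_induction with
  | base => exact List.prefix_rfl
  | succ t hst ih =>
    obtain ⟨_, -, hstep⟩ := r.step_mem a t (hs.trans hst)
    rw [hstep]
    exact ih.trans (List.prefix_append _ _)

theorem wake_eq_of_mem_eq (ha : r.wake a ≤ t) (hb : r.wake b ≤ t)
    (hmem : r.mem a t = r.mem b t) : r.wake a = r.wake b := by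
  have hlen := r.length_mem ha
  rw [hmem, r.length_mem hb] at hlen
  omega

theorem mem_eq_of_mem_eq_of_le (ha : r.wake a ≤ t) (hb : r.wake b ≤ t)
    (hmem : r.mem a t = r.mem b t) (hs : r.wake a ≤ s) (hst : s ≤ t) :
    r.mem a s = r.mem b s := by
  have hs' : r.wake b ≤ s := r.wake_eq_of_mem_eq ha hb hmem ▸ hs
  have hlen : (r.mem a s).length = (r.mem b s).length := by
    rw [r.length_mem hs, r.length_mem hs', r.wake_eq_of_mem_eq ha hb hmem]
  rw [List.prefix_iff_eq_take.mp (r.mem_prefix hs hst),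
    List.prefix_iff_eq_take.mp (r.mem_prefix hs' hst), hmem, hlen]

theorem pos_eq_of_pos_succ_eq (hwf : G.WellFormed) (ha : r.wake a ≤ s) (hb : r.wake b ≤ s)
    (hmem : r.mem a s = r.mem b s) (hmem_succ : r.mem a (s + 1) = r.mem b (s + 1))
    (hpos_succ : r.pos a (s + 1) = r.pos b (s + 1)) : r.pos a s = r.pos b s := by
  obtain ⟨_, -, hstep_a⟩ := r.step_mem a s ha
  obtain ⟨_, -, hstep_b⟩ := r.step_mem b s hb
  rw [hstep_a, hstep_b, hmem] at hmem_succ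
  have hports := List.append_cancel_left hmem_succ
  simp only [List.cons.injEq, Box.mk.injEq] at hports
  refine hwf.eq_of_moveOf_eq (m := alg (r.mem b s)) (Prod.ext ?_ hports.1.2.1)
  rw [← hmem, ← r.step_pos a s ha, hmem, ← r.step_pos b s hb, hpos_succ]

theorem pos_eq_of_mem_eq (hwf : G.WellFormed) (ha : r.wake a ≤ t) (hb : r.wake b ≤ t)
    (hmem : r.mem a t = r.mem b t) (hpos : r.pos a t = r.pos b t) (hs : r.wake a ≤ s)
    (hst : s ≤ t) : r.pos a s = r.pos b s := by
  have hwake := r.wake_eq_of_mem_eq ha hb hmem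
  refine Nat.decreasingInduction (motive := fun s _ => r.wake a ≤ s → r.pos a s = r.pos b s)
    (fun s hst ih hs => ?_) (fun _ => hpos) hst hs
  exact r.pos_eq_of_pos_succ_eq hwf hs (hwake ▸ hs)
    (r.mem_eq_of_mem_eq_of_le ha hb hmem hs hst.le)
    (r.mem_eq_of_mem_eq_of_le ha hb hmem (by omega) hst) (ih (by omega))

end CRunW

theorem collocated_memories_differ_general {V A : Type}
    (G : PGraph V) (hwf : G.WellFormed)
    (start : A → V) (alg : Memory → Option ℕ) (advWake : A → ℕ)
    (r : CRunW G start alg advWake) (a b : A) (hab : a ≠ b) (t : ℕ)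
    (ha : r.wake a ≤ t) (hb : r.wake b ≤ t) (hmeet : r.pos a t = r.pos b t) :
    r.mem a t ≠ r.mem b t := by
  intro hmem
  have hwake := r.wake_eq_of_mem_eq ha hb hmem
  have hstart := r.pos_eq_of_mem_eq hwf ha hb hmem hmeet le_rfl ha
  rw [r.pos_before a _ le_rfl, r.pos_before b _ hwake.le] at hstart
  exact hab (r.startInj hstart)

/-- two agents executing the same deterministic algorithm that are at the
same node in the same round (both being awake) must have different memories. -/
theorem collocated_memories_differ {V A : Type} [Fintype V] [Fintype A]
    (G : PGraph V) (hwf : G.WellFormed) (hconn : G.Connected)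
    (start : A → V) (alg : Memory → Option ℕ) (advWake : A → ℕ)
    (r : CRunW G start alg advWake) (a b : A) (hab : a ≠ b) (t : ℕ)
    (ha : r.wake a ≤ t) (hb : r.wake b ≤ t) (hmeet : r.pos a t = r.pos b t) :
    r.mem a t ≠ r.mem b t :=
  collocated_memories_differ_general G hwf start alg advWake r a b hab t ha hb hmeet
end

section
/- For n = 4k with k ≥ 2, the configuration D_n satisfies condition G: the cycle of size n with clockwise ports and pendant leaves (two leaves at v_0 and one leaf at every other even-indexed node), with agents at all nodes v_i with i ≡ 0 or i ≡ 3 (mod 4), has two agents with different views and all agents with pairwise distinct enhanced views. -/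
/-- Condition G of the paper: there exist agents with different views, and each agent
has a unique enhanced view (`occ` marks the nodes occupied in the initial
configuration). -/
def CondG {V A : Type} (G : PGraph V) (start : A → V) (occ : V → Bool) : Prop :=
  (∃ a b : A, ¬ G.SameView (start a) (start b)) ∧
    ∀ a b : A, a ≠ b → ¬ G.SameEView occ (start a) (start b)

/-- Configuration C's graph: a 4-cycle `v₀,v₁,v₂,v₃` (nodes `Sum.inl i`) with clockwise
ports 0,1 at each node (the edge `{vᵢ, vᵢ₊₁}` has port 0 at `vᵢ` and port 1 at `vᵢ₊₁`),
and pendant nodes of degree 1 (nodes `Sum.inr j`) attached to the two non-adjacent cycle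
nodes `v₀` and `v₂` by port 2 at the cycle node and port 0 at the leaf. -/
def graphC : PGraph (Fin 4 ⊕ Fin 2) where
  deg := fun x =>
    match x with
    | .inl i => if i.val % 2 = 0 then 3 else 2
    | .inr _ => 1
  next := fun x p =>
    match x with
    | .inl i =>
      if p = 0 then some (.inl (i + 1), 1)
      else if p = 1 then some (.inl (i - 1), 0)
      else if p = 2 ∧ i.val % 2 = 0 then
        some (.inr ⟨i.val / 2, by have := i.isLt; omega⟩, 0)
      else none
    | .inr j =>
      if p = 0 then some (.inl ⟨2 * j.val, by have := j.isLt; omega⟩, 2) else none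

/-- In configuration C the two agents start at `v₁` (a cycle node of degree 2) and at
its clockwise neighbor `v₂` (of degree 3). -/
def startC : Fin 2 → Fin 4 ⊕ Fin 2 := fun a => if a = 0 then .inl 1 else .inl 2

/-- The occupied nodes of configuration C. -/
def occC : Fin 4 ⊕ Fin 2 → Bool := fun x => decide (x = .inl 1 ∨ x = .inl 2)

/-- The graph of configuration `D n` (for even `n`): a cycle `v₀,…,v_{n-1}` (nodes
`Sum.inl i`) with clockwise ports 0,1, two pendant leaves attached to `v₀` (by ports 2
and 3 at `v₀`), and one pendant leaf attached to every other node of even index (by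
port 2).  The leaf `Sum.inr j` for `j < n / 2` is the leaf of `v_{2j}`, and
`Sum.inr (n / 2)` is the second leaf of `v₀`. -/
def graphD (n : ℕ) [NeZero n] : PGraph (Fin n ⊕ Fin (n / 2 + 1)) where
  deg := fun x =>
    match x with
    | .inl i => if i.val = 0 then 4 else if i.val % 2 = 0 then 3 else 2
    | .inr _ => 1
  next := fun x p =>
    match x with
    | .inl i =>
      if p = 0 then some (.inl (i + 1), 1)
      else if p = 1 then some (.inl (i - 1), 0)
      else if p = 2 ∧ i.val % 2 = 0 then
        some (.inr ⟨i.val / 2, by have := i.isLt; omega⟩, 0)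
      else if p = 3 ∧ i.val = 0 then some (.inr ⟨n / 2, by omega⟩, 0)
      else none
    | .inr j =>
      if p = 0 then
        if hj : j.val = n / 2 then
          some (.inl ⟨0, Nat.pos_of_ne_zero (NeZero.ne n)⟩, 3)
        else some (.inl ⟨2 * j.val, by have := j.isLt; omega⟩, 2)
      else none

/-- The agents of configuration `D n`: one agent on each cycle node `v_i` with
`i ≡ 0` or `i ≡ 3 (mod 4)`. -/
def AgentsD (n : ℕ) : Type := { i : Fin n // i.val % 4 = 0 ∨ i.val % 4 = 3 }

instance (n : ℕ) : Fintype (AgentsD n) := by unfold AgentsD; infer_instance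

/-- Starting positions of the agents of configuration `D n`. -/
def startD (n : ℕ) : AgentsD n → Fin n ⊕ Fin (n / 2 + 1) := fun a => .inl a.val

/-- The occupied nodes of configuration `D n`. -/
def occD (n : ℕ) : Fin n ⊕ Fin (n / 2 + 1) → Bool := fun x =>
  match x with
  | .inl i => decide (i.val % 4 = 0 ∨ i.val % 4 = 3)
  | .inr _ => false


/-!
Walking clockwise (always leaving by port 0) from `v_i` for `n - i` steps ends at `v₀`, the
unique node of degree 4, while the same walk from any `v_j` with `j ≠ i` ends elsewhere.
Since the view records the degree at the end of every walk, distinct cycle nodes have distinct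
views under any colouring, in particular distinct enhanced views. The agents at `v₀` (degree 4)
and `v₃` (degree 2) have different views.
-/

open Fin.NatCast

variable {n : ℕ} [NeZero n]

lemma graphD_next_inl_zero (i : Fin n) :
    (graphD n).next (.inl i) 0 = some (.inl (i + 1), 1) := by
  simp [graphD]

lemma graphD_deg_inl_eq_four_iff (i : Fin n) : (graphD n).deg (.inl i) = 4 ↔ i = 0 := by
  simp only [graphD, Fin.ext_iff, Fin.val_zero]
  split_ifs <;> omega

lemma graphD_cobs_inl_replicate_zero {C : Type} (col : Fin n ⊕ Fin (n / 2 + 1) → C)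
    (m : ℕ) (i : Fin n) :
    (graphD n).cobs col (.inl i) (List.replicate m 0) =
      some (List.replicate m 1, (graphD n).deg (.inl (i + m)), col (.inl (i + m))) := by
  induction m generalizing i with
  | zero => simp [PGraph.cobs]
  | succ m ih =>
    have hshift : i + 1 + (m : Fin n) = i + ((m + 1 : ℕ) : Fin n) := by
      push_cast; rw [add_assoc, add_comm (1 : Fin n)]
    simp [List.replicate_succ, PGraph.cobs, graphD_next_inl_zero, ih, hshift]

theorem graphD_inl_eq_of_sameCView {C : Type} {col : Fin n ⊕ Fin (n / 2 + 1) → C}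
    {i j : Fin n} (h : (graphD n).SameCView col (.inl i) (.inl j)) : i = j := by
  have hwalk := h (List.replicate (-i).val 0)
  simp only [graphD_cobs_inl_replicate_zero, Fin.cast_val_eq_self, add_neg_cancel,
    Option.some.injEq, Prod.mk.injEq] at hwalk
  have hdeg : (graphD n).deg (.inl (j + -i)) = 4 :=
    hwalk.2.1 ▸ (graphD_deg_inl_eq_four_iff 0).2 rfl
  exact (add_neg_eq_zero.1 ((graphD_deg_inl_eq_four_iff _).1 hdeg)).symm

theorem configD_satisfies_condG_general (k : ℕ) [NeZero (4 * k)] :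
    CondG (graphD (4 * k)) (startD (4 * k)) (occD (4 * k)) := by
  have hk_pos : 0 < k := Nat.pos_of_ne_zero fun h => NeZero.ne (4 * k) (by omega)
  refine ⟨?_, fun a b hab h => hab (Subtype.ext (graphD_inl_eq_of_sameCView h))⟩
  refine ⟨⟨⟨0, by omega⟩, Or.inl rfl⟩, ⟨⟨3, by omega⟩, Or.inr rfl⟩, fun h => ?_⟩
  simpa [startD, PGraph.obs, graphD] using h []

/-- for `n = 4k` with `k ≥ 2`, the configuration `D n` satisfies
condition G: the cycle of size `n` with clockwise ports and pendant leaves (two leaves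
at `v₀` and one leaf at every other even-indexed node), with agents at all nodes `v_i`
with `i ≡ 0` or `i ≡ 3 (mod 4)`, has two agents with different views and all agents
with pairwise distinct enhanced views. -/
theorem configD_satisfies_condG (k : ℕ) (hk : 2 ≤ k) [NeZero (4 * k)] :
    CondG (graphD (4 * k)) (startD (4 * k)) (occD (4 * k)) :=
  configD_satisfies_condG_general k
end

section
/- Indistinguishability lemma: for any deterministic algorithm and any t ≥ 1, the agent starting at the degree-2 node of configuration C and the agent starting at node v_{4t-1} of configuration D_{8t} have identical memories during the first t rounds after simultaneous wake-up; likewise for the agents at the clockwise-neighbor node of C and at v_{4t} of D_{8t}. -/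
/-- A deterministic algorithm for anonymous agents, with (abstract) memory type `M`.
`init d` is the memory of a freshly woken agent seeing that its node has degree `d`;
`upd m d mv S` is the new memory given the old memory `m`, the degree `d` of the current
node, the exit/entry ports `mv` of the move just performed (`none` if the agent stayed),
and the set `S` of memories of the other agents met at the current node;
`out m` is the move chosen: leave by port `p` (`some p`) or stay idle (`none`). -/
structure Algo (M : Type) where
  init : ℕ → M
  upd : M → ℕ → Option (ℕ × ℕ) → Set M → M
  out : M → Option ℕ

/-- A synchronous execution, with simultaneous wake-up in round `0`, of the
deterministic algorithm `alg` by anonymous agents indexed by `A`, starting at the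
distinct nodes `start a`.  `pos a t` / `mem a t` are the position / memory of agent `a`
at the end of round `t`. -/
structure Run {V A M : Type} (G : PGraph V) (start : A → V) (alg : Algo M) where
  startInj : Function.Injective start
  pos : A → ℕ → V
  mem : A → ℕ → M
  pos_zero : ∀ a, pos a 0 = start a
  mem_zero : ∀ a, mem a 0 = alg.init (G.deg (start a))
  step_pos : ∀ a t, pos a (t + 1) = (moveOf G (pos a t) (alg.out (mem a t))).1
  step_mem : ∀ a t, mem a (t + 1) =
    alg.upd (mem a t) (G.deg (pos a (t + 1)))
      (moveOf G (pos a t) (alg.out (mem a t))).2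
      { m : M | ∃ b : A, b ≠ a ∧ pos b (t + 1) = pos a (t + 1) ∧ mem b t = m }

/-!
Both configurations are quotients of one universal configuration: the infinite comb, i.e. the
path on `ℤ` with clockwise ports and a leaf at every even integer, with agents at the integers
`≡ 0, 3 (mod 4)`. Configuration C is its quotient by the translation by `4`; this is a genuine
covering, and as the execution on the comb is invariant under that translation, it projects
exactly onto the execution on C. The ring of `D (8t)` embeds into the comb by `vᵢ ↦ i`, a local
isomorphism away from the seam `v_{8t-1}, v₀`. Information travels one edge per round, so an agent
that after `s` rounds is still more than `s` edges away from the seam cannot have noticed it. The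
agents at `v_{4t-1}` and `v_{4t}` start `4t - 1` edges away from it, hence during the first `t`
rounds they behave like their comb counterparts, and so like the two agents of C.
-/

namespace PGraph

variable {V W : Type}

def CoversAt (H : PGraph V) (G : PGraph W) (π : V → W) (u : V) : Prop :=
  G.deg (π u) = H.deg u ∧ ∀ p, G.next (π u) p = (H.next u p).map (Prod.map π id)

def IsLipschitz (G : PGraph V) (d : V → ℕ) : Prop :=
  ∀ u p w e, G.next u p = some (w, e) → d w ≤ d u + 1 ∧ d u ≤ d w + 1

theorem CoversAt.moveOf {H : PGraph V} {G : PGraph W} {π : V → W} {u : V}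
    (h : H.CoversAt G π u) (o : Option ℕ) :
    _root_.moveOf G (π u) o = Prod.map π id (_root_.moveOf H u o) := by
  rcases o with _ | p
  · rfl
  · simp only [_root_.moveOf, h.2 p]
    rcases H.next u p with _ | ⟨w, e⟩ <;> rfl

theorem IsLipschitz.comp {H : PGraph V} {G : PGraph W} {π : V → W} {d : W → ℕ}
    (hd : G.IsLipschitz d)
    (hsymm : ∀ v p w e, H.next v p = some (w, e) → H.next w e = some (v, p))
    (hcov : ∀ v, 1 ≤ d (π v) → H.CoversAt G π v) :
    H.IsLipschitz (d ∘ π) := by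
  intro v p w e hvw
  by_cases hv : 1 ≤ d (π v)
  · exact hd _ p _ e (by rw [(hcov v hv).2, hvw]; rfl)
  by_cases hw : 1 ≤ d (π w)
  · exact (hd _ e _ p (by rw [(hcov w hw).2, hsymm v p w e hvw]; rfl)).symm
  · simp only [Function.comp]
    omega

end PGraph

namespace Run

section

variable {V A M : Type} {G : PGraph V} {start : A → V} {alg : Algo M}

def meet (r : Run G start alg) (a : A) (s : ℕ) : Set M :=
  {m | ∃ b, b ≠ a ∧ r.pos b (s + 1) = r.pos a (s + 1) ∧ r.mem b s = m}

theorem mem_succ (r : Run G start alg) (a : A) (s : ℕ) :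
    r.mem a (s + 1) = alg.upd (r.mem a s) (G.deg (r.pos a (s + 1)))
      (moveOf G (r.pos a s) (alg.out (r.mem a s))).2 (r.meet a s) :=
  r.step_mem a s

theorem pos_succ_eq_or_next (r : Run G start alg) (a : A) (s : ℕ) :
    r.pos a (s + 1) = r.pos a s ∨ ∃ p e, G.next (r.pos a s) p = some (r.pos a (s + 1), e) := by
  rw [r.step_pos]
  rcases alg.out (r.mem a s) with _ | p
  · exact Or.inl rfl
  · simp only [moveOf]
    rcases h : G.next (r.pos a s) p with _ | ⟨w, e⟩
    · exact Or.inl rfl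
    · exact Or.inr ⟨p, e, h⟩

theorem _root_.PGraph.IsLipschitz.run_pos_succ {d : V → ℕ} (hd : G.IsLipschitz d)
    (r : Run G start alg) (a : A) (s : ℕ) :
    d (r.pos a (s + 1)) ≤ d (r.pos a s) + 1 ∧ d (r.pos a s) ≤ d (r.pos a (s + 1)) + 1 := by
  rcases r.pos_succ_eq_or_next a s with h | ⟨p, e, h⟩
  · rw [h]
    omega
  · exact hd _ p _ e h

theorem _root_.PGraph.IsLipschitz.run_pos {d : V → ℕ} (hd : G.IsLipschitz d)
    (r : Run G start alg) (a : A) (s : ℕ) :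
    d (r.pos a s) ≤ d (start a) + s ∧ d (start a) ≤ d (r.pos a s) + s := by
  induction s with
  | zero =>
    rw [r.pos_zero]
    omega
  | succ s ih =>
    have := hd.run_pos_succ r a s
    omega

variable (G start alg) in
def state : ℕ → A → V × M
  | 0, a => (start a, alg.init (G.deg (start a)))
  | s + 1, a =>
    let move := fun b => moveOf G (state s b).1 (alg.out (state s b).2)
    ((move a).1, alg.upd (state s a).2 (G.deg (move a).1) (move a).2
      {m | ∃ b, b ≠ a ∧ (move b).1 = (move a).1 ∧ (state s b).2 = m})

theorem nonempty (h : Function.Injective start) : Nonempty (Run G start alg) :=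
  ⟨{ startInj := h
     pos := fun a s => (state G start alg s a).1
     mem := fun a s => (state G start alg s a).2
     pos_zero := fun _ => rfl
     mem_zero := fun _ => rfl
     step_pos := fun _ _ => rfl
     step_mem := fun _ _ => rfl }⟩

end

variable {V W A B M : Type} {H : PGraph V} {G : PGraph W} {sX : A → V} {sY : B → W}
  {alg : Algo M} {rX : Run H sX alg} {rY : Run G sY alg} {π : V → W} {f : A → B}

theorem pos_succ_of_coversAt {a : A} {s : ℕ} (hpos : rY.pos (f a) s = π (rX.pos a s))
    (hmem : rY.mem (f a) s = rX.mem a s) (hcov : H.CoversAt G π (rX.pos a s)) :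
    rY.pos (f a) (s + 1) = π (rX.pos a (s + 1)) := by
  rw [rY.step_pos, rX.step_pos, hpos, hmem, hcov.moveOf]
  rfl

theorem mem_succ_of_coversAt {a : A} {s : ℕ} (hpos : rY.pos (f a) s = π (rX.pos a s))
    (hmem : rY.mem (f a) s = rX.mem a s) (hcov : H.CoversAt G π (rX.pos a s))
    (hdeg : G.deg (π (rX.pos a (s + 1))) = H.deg (rX.pos a (s + 1)))
    (hmeet : rY.meet (f a) s = rX.meet a s) :
    rY.mem (f a) (s + 1) = rX.mem a (s + 1) := by
  rw [rY.mem_succ, rX.mem_succ, pos_succ_of_coversAt hpos hmem hcov, hdeg, hmeet, hpos, hmem,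
    hcov.moveOf]
  rfl

/-- `π` is a regular covering: the maps `α γ` are deck transformations acting freely and
transitively on the fibres of `π`, the `β γ` are the matching permutations of the agents of `H`
(transitive on the fibres of `f`), and the run `rX` is equivariant under them. -/
theorem eq_map_of_covering {Γ : Type} (α : Γ → V → V) (β : Γ → A → A)
    (hcov : ∀ u, H.CoversAt G π u) (hstart : ∀ a, sY (f a) = π (sX a))
    (hf : Function.Surjective f) (hfβ : ∀ γ a, f (β γ a) = f a)
    (hfib_π : ∀ u u', π u = π u' → ∃ γ, α γ u = u')
    (hfib_f : ∀ a a', f a = f a' → ∃ γ, β γ a = a')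
    (hfree : ∀ γ u a, α γ u = u → β γ a = a)
    (hequiv : ∀ γ a s,
      rX.pos (β γ a) s = α γ (rX.pos a s) ∧ rX.mem (β γ a) s = rX.mem a s)
    (s : ℕ) (a : A) :
    rY.pos (f a) s = π (rX.pos a s) ∧ rY.mem (f a) s = rX.mem a s := by
  induction s generalizing a with
  | zero =>
    rw [rY.pos_zero, rX.pos_zero, rY.mem_zero, rX.mem_zero, hstart, (hcov _).1]
    exact ⟨rfl, rfl⟩
  | succ s ih =>
    have hpos : ∀ a, rY.pos (f a) (s + 1) = π (rX.pos a (s + 1)) := fun a =>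
      pos_succ_of_coversAt (ih a).1 (ih a).2 (hcov _)
    refine ⟨hpos a, mem_succ_of_coversAt (ih a).1 (ih a).2 (hcov _) (hcov _).1 ?_⟩
    ext m
    constructor
    · rintro ⟨b, hba, hb, rfl⟩
      obtain ⟨a₀, rfl⟩ := hf b
      obtain ⟨γ, hγ⟩ := hfib_π (rX.pos a₀ (s + 1)) (rX.pos a (s + 1))
        (by rw [← hpos a₀, ← hpos a, hb])
      refine ⟨β γ a₀, fun h => hba (by rw [← hfβ γ a₀, h]), ?_, ?_⟩
      · rw [(hequiv γ a₀ _).1, hγ]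
      · rw [(hequiv γ a₀ _).2, (ih a₀).2]
    · rintro ⟨a', ha'a, ha', rfl⟩
      refine ⟨f a', fun h => ha'a ?_, by rw [hpos a', hpos a, ha'], (ih a').2⟩
      obtain ⟨γ, rfl⟩ := hfib_f _ _ h.symm
      exact hfree γ _ a (by rw [← (hequiv γ a _).1, ha'])

/-- An agent's depth changes by at most one per round, so an agent of either run at depth `> s`
after `s` rounds has only ever seen the region where `π` is a local isomorphism. -/
theorem eq_map_of_localCovering (d : W → ℕ) (hd : G.IsLipschitz d)
    (hsymm : ∀ v p w e, H.next v p = some (w, e) → H.next w e = some (v, p))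
    (hcov : ∀ v, 1 ≤ d (π v) → H.CoversAt G π v) (hπ : Function.Injective π)
    (hf : Function.Injective f) (hstart : ∀ a, sY (f a) = π (sX a))
    (hrange : ∀ b, 1 ≤ d (sY b) → ∃ a, f a = b) (s : ℕ) (a : A)
    (ha : s + 1 ≤ d (π (rX.pos a s)) ∨ s + 1 ≤ d (rY.pos (f a) s)) :
    rY.pos (f a) s = π (rX.pos a s) ∧ rY.mem (f a) s = rX.mem a s := by
  have hdX : H.IsLipschitz (d ∘ π) := hd.comp hsymm hcov
  induction s generalizing a with
  | zero =>
    rw [rY.pos_zero, rX.pos_zero, rY.mem_zero, rX.mem_zero, hstart] at *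
    rw [(hcov _ (by omega)).1]
    exact ⟨rfl, rfl⟩
  | succ s ih =>
    have step : ∀ a,
        (s + 2 ≤ d (π (rX.pos a (s + 1))) ∨ s + 2 ≤ d (rY.pos (f a) (s + 1))) →
        rY.pos (f a) s = π (rX.pos a s) ∧ rY.mem (f a) s = rX.mem a s ∧
          H.CoversAt G π (rX.pos a s) ∧ rY.pos (f a) (s + 1) = π (rX.pos a (s + 1)) ∧
          s + 2 ≤ d (π (rX.pos a (s + 1))) := by
      intro a ha
      have hX := hdX.run_pos_succ rX a s
      have hY := hd.run_pos_succ rY (f a) s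
      simp only [Function.comp] at hX
      obtain ⟨hpos, hmem⟩ := ih a (by omega)
      have hcov' : H.CoversAt G π (rX.pos a s) := hcov _ (by rw [hpos] at hY; omega)
      have hpos' := pos_succ_of_coversAt hpos hmem hcov'
      exact ⟨hpos, hmem, hcov', hpos', by rw [hpos'] at ha; omega⟩
    obtain ⟨hpos, hmem, hcov', hpos', hdepth⟩ := step a ha
    refine ⟨hpos', mem_succ_of_coversAt hpos hmem hcov' (hcov _ (by omega)).1 ?_⟩
    ext m
    constructor
    · rintro ⟨b, hba, hb, rfl⟩
      have hstart_b := (hd.run_pos rY b (s + 1)).1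
      obtain ⟨a', rfl⟩ := hrange b (by rw [hb, hpos'] at hstart_b; omega)
      obtain ⟨-, hmem', -, hpos'', -⟩ := step a' (Or.inr (by rw [hb, hpos']; exact hdepth))
      exact ⟨a', fun h => hba (h ▸ rfl), hπ (by rw [← hpos', ← hpos'', hb]), hmem'.symm⟩
    · rintro ⟨a', ha'a, ha', rfl⟩
      obtain ⟨-, hmem', -, hpos'', -⟩ := step a' (Or.inl (by rw [ha']; exact hdepth))
      exact ⟨f a', fun h => ha'a (hf h), by rw [hpos'', hpos', ha'], hmem'⟩

end Run

theorem graphD_next_symm {n : ℕ} [NeZero n] (hn : 2 ∣ n) (v : Fin n ⊕ Fin (n / 2 + 1))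
    (p : ℕ) (w : Fin n ⊕ Fin (n / 2 + 1)) (e : ℕ) (h : (graphD n).next v p = some (w, e)) :
    (graphD n).next w e = some (v, p) := by
  rcases v with i | j <;> simp only [graphD] at h
  · have := i.2
    split_ifs at h with h0 h1 h2 h3 <;> obtain ⟨rfl, rfl⟩ := Prod.mk.inj (Option.some.inj h)
    · simp [graphD, h0]
    · simp [graphD, h1]
    · simp only [graphD, dif_neg (show i.val / 2 ≠ n / 2 by omega), if_true, Option.some.injEq,
        Prod.mk.injEq, Sum.inl.injEq, Fin.ext_iff]
      omega
    · simp only [graphD, dite_true, if_true, Option.some.injEq, Prod.mk.injEq, Sum.inl.injEq,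
        Fin.ext_iff]
      omega
  · split_ifs at h with h0 h1 <;> obtain ⟨rfl, rfl⟩ := Prod.mk.inj (Option.some.inj h)
    · simp only [graphD]
      simp [Fin.ext_iff, h0, h1]
    · simp only [graphD]
      simp [h0]

def comb : PGraph (ℤ ⊕ ℤ) where
  deg
    | .inl i => if i % 2 = 0 then 3 else 2
    | .inr _ => 1
  next
    | .inl i, p =>
      if p = 0 then some (.inl (i + 1), 1)
      else if p = 1 then some (.inl (i - 1), 0)
      else if p = 2 ∧ i % 2 = 0 then some (.inr (i / 2), 0)
      else none
    | .inr k, p => if p = 0 then some (.inl (2 * k), 2) else none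

def CombAgent : Type := {j : ℤ // j % 4 = 0 ∨ j % 4 = 3}

def combStart (b : CombAgent) : ℤ ⊕ ℤ := .inl b.1

theorem combStart_injective : Function.Injective combStart := fun _ _ h =>
  Subtype.ext (Sum.inl_injective h)

namespace comb

def shift (m : ℤ) : ℤ ⊕ ℤ → ℤ ⊕ ℤ := Sum.map (· + 4 * m) (· + 2 * m)

def shiftAgent (m : ℤ) (b : CombAgent) : CombAgent := ⟨b.1 + 4 * m, by have := b.2; omega⟩

theorem coversAt_shift (m : ℤ) (u : ℤ ⊕ ℤ) : comb.CoversAt comb (shift m) u := by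
  refine ⟨?_, fun p => ?_⟩ <;> rcases u with i | k
  · simp only [comb, shift, Sum.map_inl]
    congr 1
    simp only [eq_iff_iff]
    omega
  · rfl
  · simp only [comb, shift, Sum.map_inl]
    split_ifs <;> simp_all <;> omega
  · simp only [comb, shift, Sum.map_inr]
    split_ifs <;> simp_all
    ring

theorem run_shift {M : Type} {alg : Algo M} (r : Run comb combStart alg) (m : ℤ)
    (b : CombAgent) (s : ℕ) :
    r.pos (shiftAgent m b) s = shift m (r.pos b s) ∧ r.mem (shiftAgent m b) s = r.mem b s :=
  Run.eq_map_of_covering (rX := r) (rY := r) (f := shiftAgent m) (Γ := Unit) (fun _ => id)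
    (fun _ => id) (coversAt_shift m) (fun _ => rfl)
    (fun b => ⟨shiftAgent (-m) b, Subtype.ext (by simp [shiftAgent])⟩) (fun _ _ => rfl)
    (fun u u' h => ⟨(), by rcases u with i | k <;> rcases u' with i' | k' <;> simp_all [shift]⟩)
    (fun b b' h => ⟨(), Subtype.ext (by simpa [shiftAgent] using congrArg Subtype.val h)⟩)
    (fun _ _ _ _ => rfl) (fun _ _ _ => ⟨rfl, rfl⟩) s b

/-- The shift by `2` puts the comb agents at `3` and `0 (mod 4)` onto the starting nodes `v₁` and
`v₂` of C. -/
def toC : ℤ ⊕ ℤ → Fin 4 ⊕ Fin 2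
  | .inl i => .inl ⟨((i + 2) % 4).toNat, by omega⟩
  | .inr k => .inr ⟨((k + 1) % 2).toNat, by omega⟩

def agentToC (b : CombAgent) : Fin 2 := if b.1 % 4 = 3 then 0 else 1

theorem coversAt_toC (u : ℤ ⊕ ℤ) : comb.CoversAt graphC toC u := by
  refine ⟨?_, fun p => ?_⟩ <;> rcases u with i | k
  · simp only [comb, graphC, toC]
    congr 1
    simp only [eq_iff_iff]
    omega
  · rfl
  · simp only [comb, graphC, toC]
    split_ifs <;> simp_all [toC, Fin.ext_iff, Fin.val_add, Fin.val_sub] <;> omega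
  · simp only [comb, graphC, toC]
    split_ifs <;> simp_all [toC]
    omega

theorem agentToC_eq_iff {b b' : CombAgent} : agentToC b = agentToC b' ↔ b.1 % 4 = b'.1 % 4 := by
  rcases b.2 with h | h <;> rcases b'.2 with h' | h' <;> simp [agentToC, h, h']

theorem startC_agentToC (b : CombAgent) : startC (agentToC b) = toC (combStart b) := by
  rcases b with ⟨j, hj | hj⟩ <;>
    simp [agentToC, startC, combStart, toC, hj, Fin.ext_iff] <;> omega

theorem exists_shift_of_toC_eq {u u' : ℤ ⊕ ℤ} (h : toC u = toC u') :
    ∃ m, shift m u = u' := by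
  rcases u with i | k <;> rcases u' with i' | k' <;>
    simp only [toC, Sum.inl.injEq, Sum.inr.injEq, reduceCtorEq, Fin.ext_iff] at h
  · exact ⟨(i' - i) / 4, by simp only [shift, Sum.map_inl, Sum.inl.injEq]; omega⟩
  · exact ⟨(k' - k) / 2, by simp only [shift, Sum.map_inr, Sum.inr.injEq]; omega⟩

theorem mem_agentToC {M : Type} {alg : Algo M} (rU : Run comb combStart alg)
    (rC : Run graphC startC alg) (s : ℕ) (b : CombAgent) :
    rC.mem (agentToC b) s = rU.mem b s :=
  (Run.eq_map_of_covering (rX := rU) (rY := rC) (f := agentToC) shift shiftAgent coversAt_toC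
    startC_agentToC
    (fun c => by
      fin_cases c
      · exact ⟨⟨3, by decide⟩, rfl⟩
      · exact ⟨⟨0, by decide⟩, rfl⟩)
    (fun m b => agentToC_eq_iff.2 (by simp [shiftAgent]))
    (fun _ _ => exists_shift_of_toC_eq)
    (fun b b' h => ⟨(b'.1 - b.1) / 4, Subtype.ext (by
      have := agentToC_eq_iff.1 h
      simp only [shiftAgent]
      omega)⟩)
    (fun m u b h => Subtype.ext (by rcases u with i | k <;> simp_all [shift, shiftAgent]))
    (run_shift rU) s b).2

/-- The second leaf of `v₀` goes to the leaf of `n`. -/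
def ofD (n : ℕ) : Fin n ⊕ Fin (n / 2 + 1) → ℤ ⊕ ℤ :=
  Sum.map (fun i => (i : ℤ)) (fun j => (j : ℤ))

def agentOfD (n : ℕ) (a : AgentsD n) : CombAgent := ⟨a.1.1, by have := a.2; omega⟩

def coord : ℤ ⊕ ℤ → ℤ
  | .inl i => i
  | .inr k => 2 * k

/-- `ofD n` fails to be a local isomorphism only at `v₀` (of degree 4), at `v_{n-1}` (whose port 0
leads back to `v₀`) and at the second leaf of `v₀`; all three have depth `0`. -/
def depth (n : ℕ) (u : ℤ ⊕ ℤ) : ℕ := (min (coord u) (n - 1 - coord u)).toNat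

theorem one_le_depth {n : ℕ} {u : ℤ ⊕ ℤ} :
    1 ≤ depth n u ↔ 1 ≤ coord u ∧ coord u ≤ n - 2 := by
  unfold depth
  omega

theorem isLipschitz_depth (n : ℕ) : comb.IsLipschitz (depth n) := by
  rintro (i | k) p w e h <;> simp only [comb] at h <;> split_ifs at h <;>
    obtain ⟨rfl, rfl⟩ := Prod.mk.inj (Option.some.inj h) <;> simp only [depth, coord] <;> omega

theorem graphD_coversAt {n : ℕ} [NeZero n] (v : Fin n ⊕ Fin (n / 2 + 1))
    (hv : 1 ≤ depth n (ofD n v)) : (graphD n).CoversAt comb (ofD n) v := by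
  rcases v with i | j <;> simp only [one_le_depth, coord, ofD, Sum.map_inl, Sum.map_inr] at hv
  · have hi₁ : (i + 1).val = i.val + 1 := Fin.val_add_one_of_lt' (by omega)
    have hi₂ : (i - 1).val = i.val - 1 := Fin.val_sub_one_of_ne_zero (fun h => by simp [h] at hv)
    refine ⟨?_, fun p => ?_⟩
    · simp only [comb, graphD, ofD, Sum.map_inl]
      split_ifs <;> omega
    · simp only [comb, graphD, ofD, Sum.map_inl]
      split_ifs <;> simp_all <;> omega
  · refine ⟨rfl, fun p => ?_⟩
    simp only [comb, graphD, ofD, Sum.map_inr]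
    split_ifs <;> simp_all
    omega

theorem ofD_injective (n : ℕ) : Function.Injective (ofD n) := by
  rintro (i | j) (i' | j') h <;> simp_all [ofD, Fin.ext_iff]

theorem agentOfD_injective (n : ℕ) : Function.Injective (agentOfD n) := fun a a' h => by
  have := congrArg Subtype.val h
  simp only [agentOfD, Nat.cast_inj] at this
  exact Subtype.ext (Fin.ext this)

theorem exists_agentOfD {n : ℕ} (b : CombAgent) (hb : 1 ≤ depth n (combStart b)) :
    ∃ a, agentOfD n a = b := by
  obtain ⟨j, hj⟩ := b
  simp only [one_le_depth, combStart, coord] at hb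
  exact ⟨⟨⟨j.toNat, by omega⟩, show j.toNat % 4 = 0 ∨ j.toNat % 4 = 3 by omega⟩,
    Subtype.ext (by simp only [agentOfD]; omega)⟩

theorem mem_agentOfD {M : Type} {alg : Algo M} {n : ℕ} [NeZero n] (hn : 2 ∣ n)
    (rD : Run (graphD n) (startD n) alg) (rU : Run comb combStart alg) (a : AgentsD n) (s : ℕ)
    (h : 2 * s + 1 ≤ depth n (combStart (agentOfD n a))) :
    rU.mem (agentOfD n a) s = rD.mem a s := by
  have hdepth := ((isLipschitz_depth n).run_pos rU (agentOfD n a) s).2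
  exact (Run.eq_map_of_localCovering (rX := rD) (depth n) (isLipschitz_depth n)
    (graphD_next_symm hn) graphD_coversAt (ofD_injective n) (agentOfD_injective n)
    (fun _ => rfl) exists_agentOfD s a (Or.inr (by omega))).2

end comb

/-- indistinguishability lemma.  For any deterministic algorithm and any
`t ≥ 1`, in the simultaneous-wake-up executions on configuration C and on configuration
`D (8t)`, the agent starting at the degree-2 node `v₁` of C and the agent starting at
node `v_{4t-1}` of `D (8t)` have identical memories during the first `t` rounds;
likewise, the agents at the clockwise neighbor `v₂` of C and at `v_{4t}` of `D (8t)`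
have identical memories during the first `t` rounds. -/
theorem indistinguishability {M : Type} (alg : Algo M) (t : ℕ) (ht : 0 < t)
    [NeZero (8 * t)]
    (rC : Run graphC startC alg)
    (rD : Run (graphD (8 * t)) (startD (8 * t)) alg) :
    ∀ s ≤ t,
      rC.mem 0 s = rD.mem ⟨⟨4 * t - 1, by omega⟩, Or.inr (show (4 * t - 1) % 4 = 3 by omega)⟩ s ∧
      rC.mem 1 s = rD.mem ⟨⟨4 * t, by omega⟩, Or.inl (show (4 * t) % 4 = 0 by omega)⟩ s := by
  obtain ⟨rU⟩ := Run.nonempty (G := comb) (alg := alg) combStart_injective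
  have hmem : ∀ s ≤ t, ∀ a : AgentsD (8 * t), 4 * t - 1 ≤ a.1.val → a.1.val ≤ 4 * t →
      rC.mem (comb.agentToC (comb.agentOfD _ a)) s = rD.mem a s := fun s hs a h₁ h₂ => by
    rw [comb.mem_agentToC rU rC, comb.mem_agentOfD ⟨4 * t, by ring⟩ rD rU a s]
    simp only [comb.depth, comb.coord, combStart, comb.agentOfD]
    omega
  intro s hs
  constructor
  · convert hmem s hs ⟨⟨4 * t - 1, by omega⟩, Or.inr (show (4 * t - 1) % 4 = 3 by omega)⟩
      le_rfl (by simp) using 2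
    rw [comb.agentToC, if_pos (by simp only [comb.agentOfD]; omega)]
  · convert hmem s hs ⟨⟨4 * t, by omega⟩, Or.inl (show (4 * t) % 4 = 0 by omega)⟩
      (by simp) le_rfl using 2
    simp [comb.agentToC, comb.agentOfD]
end

section
/- Clone configurations cannot arise: if in the final configuration of an execution (where every agent's memory in each round is determined by the memories in the previous round via the same deterministic rule) two distinct occupied nodes have identical colored views, then in the initial configuration two distinct agents had identical enhanced views. -/
/-- The coloring of the nodes in round `T`: each node is colored by the multiset of the
memories of the agents located at it (so two occupied nodes get the same color exactly
when the agents at them can be matched up so that matched agents have equal memories). -/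
def colorAt {V A : Type} [Fintype A] [DecidableEq V] {G : PGraph V} {start : A → V}
    {alg : Memory → Option ℕ} {advWake : A → ℕ}
    (r : CRunW G start alg advWake) (T : ℕ) (v : V) : Multiset Memory :=
  (Finset.univ.val.filter fun a : A => r.pos a T = v).map fun a : A => r.mem a T

/-!
Backward induction on rounds.  An agent's memory at round `t + 1` is its memory at round `t`
followed by a box recording the ports of its last move; since every edge can be traversed back
through its entry port, this box, together with the agent's current node, determines the node
it came from.  Hence the colored view of a node at round `t + 1` determines the color of that
node at round `t`, and so the whole colored view at round `t`.  Two agents at distinct nodes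
with equal memories at round `t + 1` therefore had equal memories at round `t`, made the same
move, and came from distinct nodes with equal colored views.  At round `0` the colors only
record which nodes are occupied, so colored views there are enhanced views.
-/

namespace PGraph

section ColoredView

variable {V C C' : Type} {G : PGraph V} {col : V → C} {col' : V → C'} {x y : V}

namespace SameCView

lemma deg_eq (h : G.SameCView col x y) : G.deg x = G.deg y := by
  simpa [cobs] using congrArg (Option.map fun r => r.2.1) (h [])

lemma col_eq (h : G.SameCView col x y) : col x = col y := by
  simpa [cobs] using congrArg (Option.map fun r => r.2.2) (h [])

lemma next_rel (h : G.SameCView col x y) (p : ℕ) :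
    Option.Rel (fun a b => a.2 = b.2 ∧ G.SameCView col a.1 b.1) (G.next x p) (G.next y p) := by
  have h₁ := h [p]
  rcases hx : G.next x p with _ | ⟨x', e⟩ <;> rcases hy : G.next y p with _ | ⟨y', e'⟩ <;>
    simp only [cobs, hx, hy, reduceCtorEq, Option.map_some, Option.some.injEq, Prod.mk.injEq,
      List.cons.injEq, and_true] at h₁
  · exact .none
  · obtain ⟨rfl, -⟩ := h₁
    refine .some ⟨rfl, fun q => Option.map_injective ?_ (by simpa [cobs, hx, hy] using h (p :: q))⟩
    intro a b hab
    simpa [Prod.ext_iff] using hab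

lemma recolor (key : ∀ x y, G.SameCView col x y → col' x = col' y)
    (h : G.SameCView col x y) : G.SameCView col' x y := by
  intro q
  induction q generalizing x y with
  | nil => simp [cobs, h.deg_eq, key x y h]
  | cons p q ih =>
    have hrel := h.next_rel p
    rcases hx : G.next x p with _ | ⟨x', e⟩ <;> rcases hy : G.next y p with _ | ⟨y', e'⟩ <;>
      rw [hx, hy] at hrel <;> cases hrel
    · simp [cobs, hx, hy]
    · rename_i hrel
      obtain ⟨rfl, h'⟩ := hrel
      simp [cobs, hx, hy, ih h']

lemma moveOf (h : G.SameCView col x y) (o : Option ℕ) :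
    G.SameCView col (moveOf G x o).1 (moveOf G y o).1 ∧ (moveOf G x o).2 = (moveOf G y o).2 := by
  rcases o with _ | p
  · exact ⟨h, rfl⟩
  have hrel := h.next_rel p
  rcases hx : G.next x p with _ | ⟨x', e⟩ <;> rcases hy : G.next y p with _ | ⟨y', e'⟩ <;>
    rw [hx, hy] at hrel <;> cases hrel
  · simpa [_root_.moveOf, hx, hy] using h
  · rename_i hrel
    obtain ⟨rfl, h'⟩ := hrel
    simpa [_root_.moveOf, hx, hy] using h'

end SameCView

end ColoredView

end PGraph

section Moves

variable {V : Type} {G : PGraph V}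

/-- Moving back through the entry port of a move undoes it. -/
lemma moveOf_back (hwf : G.WellFormed) (z : V) (o : Option ℕ) :
    (moveOf G (moveOf G z o).1 ((moveOf G z o).2.map Prod.snd)).1 = z := by
  rcases o with _ | p
  · rfl
  rcases hz : G.next z p with _ | ⟨w, e⟩
  · simp [moveOf, hz]
  · simp [moveOf, hz, (hwf.2 _ _ _ _ hz).2]

lemma moveOf_injective (hwf : G.WellFormed) {z z' : V} {o o' : Option ℕ}
    (h : moveOf G z o = moveOf G z' o') : z = z' := by
  rw [← moveOf_back hwf z o, ← moveOf_back hwf z' o', h]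

end Moves

def Box.move : Box → Option (ℕ × ℕ)
  | .mk _ mv _ => mv

namespace CRunW

section SimultaneousWakeUp

variable {V A : Type} {G : PGraph V} {start : A → V} {alg : Memory → Option ℕ}
  (r : CRunW G start alg (fun _ => 0))

def moveAt (a : A) (t : ℕ) : V × Option (ℕ × ℕ) := moveOf G (r.pos a t) (alg (r.mem a t))

lemma wake_eq_zero (a : A) : r.wake a = 0 := Nat.le_zero.mp (r.wake_le a)

lemma pos_zero (a : A) : r.pos a 0 = start a := r.pos_before a 0 (r.wake_eq_zero a).ge

lemma pos_succ (a : A) (t : ℕ) : r.pos a (t + 1) = (r.moveAt a t).1 :=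
  r.step_pos a t (by simp [r.wake_eq_zero])

lemma mem_succ (a : A) (t : ℕ) :
    (r.mem a (t + 1)).dropLast = r.mem a t ∧
      (r.mem a (t + 1)).getLast?.map Box.move = some (r.moveAt a t).2 := by
  obtain ⟨met, -, h⟩ := r.step_mem a t (by simp [r.wake_eq_zero])
  simp [h, moveAt, Box.move]

lemma mem_eq_and_moveAt_eq_of_mem_succ_eq {a b : A} {t : ℕ}
    (h : r.mem a (t + 1) = r.mem b (t + 1)) :
    r.mem a t = r.mem b t ∧ (r.moveAt a t).2 = (r.moveAt b t).2 := by
  obtain ⟨ha₁, ha₂⟩ := r.mem_succ a t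
  obtain ⟨hb₁, hb₂⟩ := r.mem_succ b t
  rw [h] at ha₁ ha₂
  exact ⟨ha₁.symm.trans hb₁, Option.some_injective _ (ha₂.symm.trans hb₂)⟩

lemma pos_eq_moveOf_back (hwf : G.WellFormed) (a : A) (t : ℕ) :
    r.pos a t = (moveOf G (r.pos a (t + 1)) ((r.moveAt a t).2.map Prod.snd)).1 := by
  rw [pos_succ, moveAt, moveOf_back hwf]

end SimultaneousWakeUp

end CRunW

section Colors

open Finset

variable {V A : Type} [DecidableEq V] [Fintype A] {G : PGraph V} {start : A → V}
  {alg : Memory → Option ℕ}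

lemma mem_colorAt {advWake : A → ℕ} (r : CRunW G start alg advWake) {T : ℕ} {u : V}
    {m : Memory} : m ∈ colorAt r T u ↔ ∃ a, r.pos a T = u ∧ r.mem a T = m := by
  simp [colorAt]

lemma countP_colorAt {advWake : A → ℕ} (r : CRunW G start alg advWake) (P : Memory → Prop)
    [DecidablePred P] (T : ℕ) (u : V) :
    (colorAt r T u).countP P = #{a | r.pos a T = u ∧ P (r.mem a T)} := by
  rw [colorAt, Multiset.countP_map, Multiset.filter_filter]
  simp_rw [and_comm]
  rfl

lemma exists_pos_mem_eq_of_colorAt_eq {advWake : A → ℕ} {r : CRunW G start alg advWake}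
    {T : ℕ} {v w : V} (h : colorAt r T v = colorAt r T w) {a : A} (ha : r.pos a T = v) :
    ∃ b, r.pos b T = w ∧ r.mem b T = r.mem a T :=
  (mem_colorAt r).mp (h ▸ (mem_colorAt r).mpr ⟨a, ha, rfl⟩)

variable (r : CRunW G start alg (fun _ => 0))

open Classical in
/-- All agents with memory `m` at `x` make the same move, so they are recovered, one round
later, at its target from the last box of their memory. -/
lemma count_colorAt_eq_countP_succ (hwf : G.WellFormed) (t : ℕ) (x : V) (m : Memory) :
    (colorAt r t x).count m =
      (colorAt r (t + 1) (moveOf G x (alg m)).1).countP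
        (fun m' => m'.dropLast = m ∧ m'.getLast?.map Box.move = some (moveOf G x (alg m)).2) := by
  rw [Multiset.count, countP_colorAt, countP_colorAt]
  congr 1
  ext a
  simp only [mem_filter, mem_univ, true_and, r.pos_succ, r.mem_succ]
  constructor
  · rintro ⟨rfl, rfl⟩
    exact ⟨rfl, rfl, rfl⟩
  · rintro ⟨hpos, rfl, hmove⟩
    exact ⟨moveOf_injective hwf (Prod.ext hpos (Option.some_injective _ hmove)), rfl⟩

lemma colorAt_eq_of_sameCView_succ (hwf : G.WellFormed) {t : ℕ} {x y : V}
    (h : G.SameCView (colorAt r (t + 1)) x y) : colorAt r t x = colorAt r t y := by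
  classical
  ext m
  obtain ⟨hview, hmove⟩ := h.moveOf (alg m)
  rw [count_colorAt_eq_countP_succ r hwf, count_colorAt_eq_countP_succ r hwf, hview.col_eq, hmove]

lemma sameCView_of_sameCView_succ (hwf : G.WellFormed) {t : ℕ} {x y : V}
    (h : G.SameCView (colorAt r (t + 1)) x y) : G.SameCView (colorAt r t) x y :=
  h.recolor fun _ _ => colorAt_eq_of_sameCView_succ r hwf

end Colors

namespace CRunW

def HasClones {V A : Type} [DecidableEq V] [Fintype A] {G : PGraph V} {start : A → V}
    {alg : Memory → Option ℕ} {advWake : A → ℕ} (r : CRunW G start alg advWake) (T : ℕ) : Prop :=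
  ∃ v w : V, v ≠ w ∧ (∃ a, r.pos a T = v) ∧ G.SameCView (colorAt r T) v w

section Clones

variable {V A : Type} [DecidableEq V] [Fintype A] {G : PGraph V} {start : A → V}
  {alg : Memory → Option ℕ} {r : CRunW G start alg (fun _ => 0)}

/-- Agents at the two clone nodes with equal memories came, through the same entry port,
from two distinct nodes with equal colored views. -/
lemma HasClones.of_succ (hwf : G.WellFormed) {t : ℕ} (h : HasClones r (t + 1)) :
    HasClones r t := by
  obtain ⟨v, w, hvw, ⟨a, rfl⟩, hview⟩ := h
  obtain ⟨b, rfl, hmem⟩ := exists_pos_mem_eq_of_colorAt_eq hview.col_eq rfl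
  obtain ⟨hmem, hmove⟩ := r.mem_eq_and_moveAt_eq_of_mem_succ_eq hmem
  refine ⟨r.pos a t, r.pos b t, fun hab => hvw ?_, ⟨a, rfl⟩, ?_⟩
  · rw [r.pos_succ, r.pos_succ, CRunW.moveAt, CRunW.moveAt, hab, hmem]
  · rw [r.pos_eq_moveOf_back hwf a, r.pos_eq_moveOf_back hwf b, hmove]
    exact ((sameCView_of_sameCView_succ r hwf hview).moveOf _).1

lemma HasClones.zero (hwf : G.WellFormed) {T : ℕ} (h : HasClones r T) : HasClones r 0 := by
  induction T with
  | zero => exact h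
  | succ t ih => exact ih (h.of_succ hwf)

end Clones

end CRunW

theorem clone_implies_equal_enhanced_views_general {V A : Type} [DecidableEq V]
    [Fintype A] (G : PGraph V) (hwf : G.WellFormed)
    (start : A → V) (alg : Memory → Option ℕ)
    (r : CRunW G start alg (fun _ => 0)) (T : ℕ) (v w : V) (hvw : v ≠ w)
    (hv : ∃ a : A, r.pos a T = v)
    (hcol : G.SameCView (colorAt r T) v w) :
    ∃ a b : A, a ≠ b ∧
      G.SameEView (fun u => decide (∃ c : A, start c = u)) (start a) (start b) := by
  obtain ⟨v₀, w₀, hne, ⟨a, rfl⟩, hview⟩ := (show r.HasClones T from ⟨v, w, hvw, hv, hcol⟩).zero hwf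
  obtain ⟨b, rfl, -⟩ := exists_pos_mem_eq_of_colorAt_eq hview.col_eq rfl
  have occupied_iff (u : V) : (∃ c, start c = u) ↔ ∃ m, m ∈ colorAt r 0 u := by
    simp [mem_colorAt, r.pos_zero]
  refine ⟨a, b, fun hab => hne (hab ▸ rfl), ?_⟩
  rw [← r.pos_zero a, ← r.pos_zero b]
  exact hview.recolor fun x y hxy =>
    decide_eq_decide.mpr (by rw [occupied_iff, occupied_iff, hxy.col_eq])

/-- clone configurations cannot arise.  In an execution (with simultaneous
wake-up in round 0, memories evolving deterministically by appending one memory box per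
round), if at some round `T` two distinct occupied nodes have identical colored views,
then in the initial configuration two distinct agents had identical enhanced views. -/
theorem clone_implies_equal_enhanced_views {V A : Type} [Fintype V] [DecidableEq V]
    [Fintype A] (G : PGraph V) (hwf : G.WellFormed) (hconn : G.Connected)
    (start : A → V) (alg : Memory → Option ℕ)
    (r : CRunW G start alg (fun _ => 0)) (T : ℕ) (v w : V) (hvw : v ≠ w)
    (hv : ∃ a : A, r.pos a T = v) (hw : ∃ a : A, r.pos a T = w)
    (hcol : G.SameCView (colorAt r T) v w) :
    ∃ a b : A, a ≠ b ∧
      G.SameEView (fun u => decide (∃ c : A, start c = u)) (start a) (start b) :=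
  clone_implies_equal_enhanced_views_general G hwf start alg r T v w hvw hv hcol
end
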